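/- arXiv:1912.03331 — 3 statements merged into one kernel-verified Lean document; each statement's English description precedes it below -/
import Mathlib

section
/- Let m ≥ 3 be an integer. The normal form of a formal (T)-structure over the germ at 0 of the F-manifold I₂(m) is unique: if f and f̃ both lie in ℂ[[z]][t₂] with all t₂-coefficients of degree at most m−4, and the pairs (C₁, C₂ + z·f·E) and (C₁, C₂ + z·f̃·E) are formally gauge-equivalent, then f = f̃. -/
noncomputable section

abbrev R2 : Type := MvPowerSeries (Fin 2) ℂ
abbrev RZ : Type := PowerSeries R2
abbrev Mat2 : Type := Matrix (Fin 2) (Fin 2) RZ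

def t1 : R2 := MvPowerSeries.X 0
def t2 : R2 := MvPowerSeries.X 1

/-- Formal partial derivative `∂/∂tᵢ` on `ℂ[[t₁,t₂]]`. -/
def pd (i : Fin 2) (f : R2) : R2 :=
  fun d => ((d i : ℂ) + 1) * MvPowerSeries.coeff (d + Finsupp.single i 1) f

/-- Formal partial derivative `∂/∂tᵢ` on `R[[z]]`, acting coefficientwise. -/
def pdZ (i : Fin 2) (f : RZ) : RZ :=
  PowerSeries.mk fun k => pd i (PowerSeries.coeff k f)

def pdM (i : Fin 2) (X : Mat2) : Mat2 := X.map (pdZ i)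

def dzM (X : Mat2) : Mat2 := X.map PowerSeries.derivativeFun

def coefM (k : ℕ) (X : Mat2) : Matrix (Fin 2) (Fin 2) R2 :=
  X.map (PowerSeries.coeff (R := R2) k)

def z : RZ := PowerSeries.X

def cR : R2 →+* RZ := (PowerSeries.C : R2 →+* RZ)

def cC (a : ℂ) : RZ := cR ((MvPowerSeries.C : ℂ →+* R2) a)

def C1 : Matrix (Fin 2) (Fin 2) R2 := 1
def C2 (m : ℕ) : Matrix (Fin 2) (Fin 2) R2 := !![0, t2 ^ (m - 2); 1, 0]
def Dm : Matrix (Fin 2) (Fin 2) R2 := !![1, 0; 0, -1]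
def Em : Matrix (Fin 2) (Fin 2) R2 := !![0, 1; 0, 0]

def mR (X : Matrix (Fin 2) (Fin 2) R2) : Mat2 := X.map cR

structure IsT (m : ℕ) (A₁ A₂ : Mat2) : Prop where
  flat : z • pdM 0 A₂ - z • pdM 1 A₁ + (A₁ * A₂ - A₂ * A₁) = 0
  init1 : coefM 0 A₁ = C1
  init2 : coefM 0 A₂ * coefM 0 A₂ = t2 ^ (m - 2) • C1
  nonzero : (coefM 0 A₂).map (MvPowerSeries.constantCoeff : R2 →+* ℂ) ≠ 0

def GaugeT (A₁ A₂ A₁' A₂' : Mat2) : Prop :=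
  ∃ T : Mat2, IsUnit T ∧
    z • pdM 0 T + A₁ * T - T * A₁' = 0 ∧
    z • pdM 1 T + A₂ * T - T * A₂' = 0

def PolyT2 (m : ℕ) (f : RZ) : Prop :=
  ∀ (k : ℕ) (d : Fin 2 →₀ ℕ),
    MvPowerSeries.coeff d (PowerSeries.coeff k f) ≠ 0 → d 0 = 0 ∧ d 1 + 4 ≤ m

def NA₂ (m : ℕ) (f : RZ) : Mat2 := mR (C2 m) + (z * f) • mR Em

/- ### Auxiliary material for the proof -/

open MvPowerSeries Finsupp

lemma pd_coeff (i : Fin 2) (f : R2) (d : Fin 2 →₀ ℕ) :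
    MvPowerSeries.coeff (R := ℂ) d (pd i f) = ((d i : ℂ) + 1) * coeff (R := ℂ) (d + single i 1) f := rfl

lemma pd_zero (i : Fin 2) : pd i (0 : R2) = 0 := by
  funext d; simp only [pd, map_zero, mul_zero]; rfl

lemma t2_pow (N : ℕ) : (t2 ^ N : R2) = monomial (R := ℂ) (single 1 N) 1 := X_pow_eq 1 N

lemma fin2_finsupp_ext {u v : Fin 2 →₀ ℕ} (h0 : u 0 = v 0) (h1 : u 1 = v 1) : u = v := by
  ext i
  fin_cases i
  · exact h0
  · exact h1

lemma r2_add_self {x : R2} (h : x + x = 0) : x = 0 := by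
  ext d
  have hd := congrArg (coeff (R := ℂ) d) h
  rw [map_add, map_zero] at hd
  rw [map_zero]
  linear_combination hd / 2

lemma key_vanish (N : ℕ) (hN : 1 ≤ N) (c : R2)
    (h : pd 1 (t2 ^ N * c) + t2 ^ N * pd 1 c = 0) : c = 0 := by
  ext e
  rw [map_zero]
  set d' : Fin 2 →₀ ℕ := e + single 1 (N - 1) with hd'
  have he := congrArg (coeff (R := ℂ) d') h
  rw [map_add, map_zero, pd_coeff] at he
  have hd1 : d' (1 : Fin 2) = e 1 + (N - 1) := by
    simp [hd', Finsupp.add_apply]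
  have h1 : d' + single 1 1 = single 1 N + e := by
    apply fin2_finsupp_ext <;>
      simp [hd', Finsupp.add_apply, Finsupp.single_apply] <;> omega
  have hterm1 : coeff (R := ℂ) (d' + single 1 1) (t2 ^ N * c) = coeff (R := ℂ) e c := by
    rw [h1, t2_pow, coeff_add_monomial_mul, one_mul]
  rw [hterm1] at he
  rcases Nat.eq_zero_or_pos (e 1) with h0 | h0
  · have h2 : coeff (R := ℂ) d' (t2 ^ N * pd 1 c) = 0 := by
      rw [t2_pow, coeff_monomial_mul, if_neg]
      intro hle
      have := (Finsupp.single_le_iff).mp hle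
      omega
    rw [h2, add_zero] at he
    have hcast : ((d' 1 : ℂ) + 1) = ((d' 1 + 1 : ℕ) : ℂ) := by push_cast; ring
    rw [hcast] at he
    rcases mul_eq_zero.mp he with h' | h'
    · exact absurd (Nat.cast_eq_zero.mp h') (by omega)
    · exact h'
  · set e₀ : Fin 2 →₀ ℕ := e - single 1 1 with he₀
    have hle : single (1 : Fin 2) 1 ≤ e := Finsupp.single_le_iff.mpr h0
    have hee : e₀ + single 1 1 = e := tsub_add_cancel_of_le hle
    have h3 : d' = single 1 N + e₀ := by
      apply fin2_finsupp_ext <;>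
        simp [hd', he₀, Finsupp.add_apply, Finsupp.single_apply, Finsupp.tsub_apply] <;> omega
    have h2 : coeff (R := ℂ) d' (t2 ^ N * pd 1 c) = ((e₀ 1 : ℂ) + 1) * coeff (R := ℂ) e c := by
      rw [h3, t2_pow, coeff_monomial_mul, if_pos le_self_add, add_tsub_cancel_left, one_mul,
        pd_coeff, hee]
    rw [h2] at he
    have he' : ((d' 1 + 1 + (e₀ 1 + 1) : ℕ) : ℂ) * coeff (R := ℂ) e c = 0 := by
      push_cast
      linear_combination he
    rcases mul_eq_zero.mp he' with h' | h'
    · exact absurd (Nat.cast_eq_zero.mp h') (by omega)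
    · exact h'

def conv2 (F C : ℕ → R2) (k : ℕ) : R2 := ∑ p ∈ Finset.HasAntidiagonal.antidiagonal k, F p.1 * C p.2

lemma conv2_eq_zero {F C : ℕ → R2} {k : ℕ} (h : ∀ j ≤ k, C j = 0) : conv2 F C k = 0 := by
  apply Finset.sum_eq_zero
  intro p hp
  rw [Finset.HasAntidiagonal.mem_antidiagonal] at hp
  rw [h p.2 (by omega), mul_zero]

lemma core (m : ℕ) (hm : 3 ≤ m)
    (F F' A B C D : ℕ → R2)
    (hF : ∀ k d, MvPowerSeries.coeff (R := ℂ) d (F k) ≠ 0 → d 0 = 0 ∧ d 1 + 4 ≤ m)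
    (hF' : ∀ k d, MvPowerSeries.coeff (R := ℂ) d (F' k) ≠ 0 → d 0 = 0 ∧ d 1 + 4 ≤ m)
    (e11 : ∀ k, pd 1 (A k) + (t2 ^ (m-2) * C (k+1) + conv2 F C k) - B (k+1) = 0)
    (e110 : t2 ^ (m-2) * C 0 - B 0 = 0)
    (e12 : ∀ k, pd 1 (B k) + (t2 ^ (m-2) * D (k+1) + conv2 F D k)
        - (t2 ^ (m-2) * A (k+1) + conv2 F' A k) = 0)
    (e21 : ∀ k, pd 1 (C k) + A (k+1) - D (k+1) = 0)
    (e210 : A 0 - D 0 = 0)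
    (e22 : ∀ k, pd 1 (D k) + B (k+1) - (t2 ^ (m-2) * C (k+1) + conv2 F' C k) = 0)
    (hA0 : MvPowerSeries.constantCoeff (σ := Fin 2) (R := ℂ) (A 0) ≠ 0) :
    ∀ k, F k = F' k := by
  classical
  by_contra hc
  push_neg at hc
  set K := Nat.find hc with hKdef
  have hK : F K ≠ F' K := Nat.find_spec hc
  have hmin : ∀ j, j < K → F j = F' j := by
    intro j hj
    by_contra hj'
    exact Nat.find_min hc hj hj'
  have Q : ∀ k, k < K → C k = 0 ∧ B k = 0 ∧ A k = D k ∧ pd 1 (A k) = 0 := by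
    intro k
    induction k using Nat.strong_induction_on with
    | _ k IH =>
      intro hkK
      have hAD : A k = D k := by
        cases k with
        | zero => linear_combination e210
        | succ j =>
          have hCj : C j = 0 := (IH j (by omega) (by omega)).1
          have := e21 j
          rw [hCj, pd_zero] at this
          linear_combination this
      have hB : B k = t2 ^ (m-2) * C k := by
        cases k with
        | zero => linear_combination - e110
        | succ j =>
          have hpdAj : pd 1 (A j) = 0 := (IH j (by omega) (by omega)).2.2.2
          have hconv : conv2 F C j = 0 :=
            conv2_eq_zero fun i hi => (IH i (by omega) (by omega)).1
          have := e11 j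
          rw [hpdAj, hconv] at this
          linear_combination - this
      have hconvDA : conv2 F D k = conv2 F' A k := by
        apply Finset.sum_congr rfl
        intro p hp
        rw [Finset.HasAntidiagonal.mem_antidiagonal] at hp
        have h1 : F p.1 = F' p.1 := hmin p.1 (by omega)
        have h2 : D p.2 = A p.2 := by
          rcases Nat.lt_or_ge p.2 k with h | h
          · exact ((IH p.2 h (by omega)).2.2.1).symm
          · have : p.2 = k := by omega
            rw [this, hAD]
        rw [h1, h2]
      have hC : C k = 0 := by
        apply key_vanish (m-2) (by omega)
        have h12 := e12 k
        rw [hB] at h12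
        linear_combination h12 + t2 ^ (m-2) * e21 k - hconvDA
      have hB0 : B k = 0 := by rw [hB, hC, mul_zero]
      refine ⟨hC, hB0, hAD, ?_⟩
      have hcF : conv2 F C k = 0 := conv2_eq_zero fun i hi => by
        rcases Nat.lt_or_ge i k with h | h
        · exact (IH i h (by omega)).1
        · have : i = k := by omega
          rw [this, hC]
      have hcF' : conv2 F' C k = 0 := conv2_eq_zero fun i hi => by
        rcases Nat.lt_or_ge i k with h | h
        · exact (IH i h (by omega)).1
        · have : i = k := by omega
          rw [this, hC]
      have h11 := e11 k
      have h22 := e22 k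
      rw [hcF] at h11
      rw [hcF'] at h22
      have hsum : pd 1 (A k) + pd 1 (D k) = 0 := by linear_combination h11 + h22
      rw [← hAD] at hsum
      exact r2_add_self hsum
  have hADK : A K = D K := by
    rcases eq_or_ne K 0 with hKe | hKe
    · rw [hKe]; linear_combination e210
    · obtain ⟨j, hj⟩ := Nat.exists_eq_succ_of_ne_zero hKe
      have hCj : C j = 0 := (Q j (by omega)).1
      have := e21 j
      rw [hCj, pd_zero] at this
      rw [hj]
      linear_combination this
  have hBK : B K = t2 ^ (m-2) * C K := by
    rcases eq_or_ne K 0 with hKe | hKe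
    · rw [hKe]; linear_combination - e110
    · obtain ⟨j, hj⟩ := Nat.exists_eq_succ_of_ne_zero hKe
      have hpdAj : pd 1 (A j) = 0 := (Q j (by omega)).2.2.2
      have hconv : conv2 F C j = 0 :=
        conv2_eq_zero fun i hi => (Q i (by omega)).1
      have := e11 j
      rw [hpdAj, hconv] at this
      rw [hj]
      linear_combination - this
  have hconvK : conv2 F D K - conv2 F' A K = (F K - F' K) * A 0 := by
    have h1 : conv2 F D K = conv2 F A K := by
      apply Finset.sum_congr rfl
      intro p hp
      rw [Finset.HasAntidiagonal.mem_antidiagonal] at hp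
      have h2 : D p.2 = A p.2 := by
        rcases Nat.lt_or_ge p.2 K with h | h
        · exact ((Q p.2 h).2.2.1).symm
        · have : p.2 = K := by omega
          rw [this, hADK]
      rw [h2]
    rw [h1]
    have h2 : conv2 F A K - conv2 F' A K
        = ∑ p ∈ Finset.HasAntidiagonal.antidiagonal K, (F p.1 - F' p.1) * A p.2 := by
      rw [conv2, conv2, ← Finset.sum_sub_distrib]
      exact Finset.sum_congr rfl fun p _ => by ring
    rw [h2]
    apply Finset.sum_eq_single_of_mem (K, 0)
    · simp [Finset.mem_antidiagonal]
    · intro p hp hne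
      rw [Finset.HasAntidiagonal.mem_antidiagonal] at hp
      have : p.1 < K := by
        rcases Nat.lt_or_ge p.1 K with h | h
        · exact h
        · exfalso; apply hne
          have h1 : p.1 = K := by omega
          have h2 : p.2 = 0 := by omega
          exact Prod.ext h1 h2
      rw [hmin p.1 this, sub_self, zero_mul]
  have master : pd 1 (t2 ^ (m-2) * C K) + t2 ^ (m-2) * pd 1 (C K)
      + (F K - F' K) * A 0 = 0 := by
    have h12 := e12 K
    rw [hBK] at h12
    linear_combination h12 + t2 ^ (m-2) * e21 K - hconvK
  have hGK : F K - F' K ≠ 0 := sub_ne_zero.mpr hK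
  have hGd : ∀ d, coeff (R := ℂ) d (F K - F' K) ≠ 0 → d 0 = 0 ∧ d 1 + 4 ≤ m := by
    intro d hd
    rw [map_sub] at hd
    by_cases h1 : coeff (R := ℂ) d (F K) = 0
    · have h2 : coeff (R := ℂ) d (F' K) ≠ 0 := fun h => hd (by rw [h1, h, sub_zero])
      exact hF' K d h2
    · exact hF K d h1
  have exV : ∃ n, coeff (R := ℂ) (single 1 n) (F K - F' K) ≠ 0 := by
    have hed : ∃ d, coeff (R := ℂ) d (F K - F' K) ≠ 0 := by
      by_contra h
      push_neg at h
      exact hGK (MvPowerSeries.ext fun d => by rw [h d, map_zero])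
    obtain ⟨d, hd⟩ := hed
    refine ⟨d 1, ?_⟩
    have : single (1 : Fin 2) (d 1) = d := by
      apply fin2_finsupp_ext
      · rw [(hGd d hd).1]; simp
      · simp
    rwa [this]
  set v := Nat.find exV with hvdef
  have hv : coeff (R := ℂ) (single 1 v) (F K - F' K) ≠ 0 := Nat.find_spec exV
  have hvmin : ∀ n, n < v → coeff (R := ℂ) (single 1 n) (F K - F' K) = 0 := by
    intro n hn
    by_contra h
    exact Nat.find_min exV hn h
  have hv4 : v + 4 ≤ m := by
    have := (hGd _ hv).2
    simpa using this
  have hc1 : coeff (R := ℂ) (single 1 v) (pd 1 (t2 ^ (m-2) * C K)) = 0 := by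
    rw [pd_coeff]
    have hsing : single (1 : Fin 2) v + single 1 1 = single 1 (v+1) := by
      rw [← Finsupp.single_add]
    rw [hsing, t2_pow, coeff_monomial_mul, if_neg, mul_zero]
    intro hle
    have := Finsupp.single_le_iff.mp hle
    simp only [Finsupp.single_eq_same] at this
    omega
  have hc2 : coeff (R := ℂ) (single 1 v) (t2 ^ (m-2) * pd 1 (C K)) = 0 := by
    rw [t2_pow, coeff_monomial_mul, if_neg]
    intro hle
    have := Finsupp.single_le_iff.mp hle
    simp only [Finsupp.single_eq_same] at this
    omega
  have hc3 : coeff (R := ℂ) (single 1 v) ((F K - F' K) * A 0)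
      = coeff (R := ℂ) (single 1 v) (F K - F' K) * constantCoeff (σ := Fin 2) (R := ℂ) (A 0) := by
    rw [MvPowerSeries.coeff_mul]
    rw [Finset.sum_eq_single_of_mem ((single 1 v : Fin 2 →₀ ℕ), (0 : Fin 2 →₀ ℕ))]
    · rw [coeff_zero_eq_constantCoeff]
    · simp [Finset.mem_antidiagonal]
    · intro p hp hne
      rw [Finset.HasAntidiagonal.mem_antidiagonal] at hp
      by_cases hz : coeff (R := ℂ) p.1 (F K - F' K) = 0
      · rw [hz, zero_mul]
      · exfalso
        have hp0 : p.1 0 + p.2 0 = 0 := by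
          have := DFunLike.congr_fun hp (0 : Fin 2)
          simpa [Finsupp.add_apply] using this
        have hp1 : p.1 1 + p.2 1 = v := by
          have := DFunLike.congr_fun hp (1 : Fin 2)
          simpa [Finsupp.add_apply] using this
        have hps : p.1 = single 1 (p.1 1) := by
          apply fin2_finsupp_ext
          · simp [(hGd p.1 hz).1]
          · simp
        have hlt : p.1 1 = v := by
          rcases Nat.lt_or_ge (p.1 1) v with h | h
          · exfalso; apply hz; rw [hps]; exact hvmin _ h
          · omega
        apply hne
        have h1 : p.1 = single 1 v := by rw [hps, hlt]
        have h2 : p.2 = 0 := by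
          apply fin2_finsupp_ext
          · simp; omega
          · simp; omega
        exact Prod.ext h1 h2
  have hfin := congrArg (coeff (R := ℂ) (single 1 v)) master
  rw [map_add, map_add, map_zero, hc1, hc2, hc3, zero_add, zero_add] at hfin
  rcases mul_eq_zero.mp hfin with h | h
  · exact hv h
  · exact hA0 h

-- entry lemmas for NA₂
lemma NA2_00 (m : ℕ) (f : RZ) : (NA₂ m f) 0 0 = 0 := by
  simp [NA₂, mR, C2, Em, Matrix.add_apply, Matrix.smul_apply, Matrix.map_apply]
lemma NA2_01 (m : ℕ) (f : RZ) : (NA₂ m f) 0 1 = cR (t2 ^ (m-2)) + z * f := by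
  simp [NA₂, mR, C2, Em, Matrix.add_apply, Matrix.smul_apply, Matrix.map_apply, smul_eq_mul,
    mul_one]
lemma NA2_10 (m : ℕ) (f : RZ) : (NA₂ m f) 1 0 = 1 := by
  simp [NA₂, mR, C2, Em, Matrix.add_apply, Matrix.smul_apply, Matrix.map_apply]
lemma NA2_11 (m : ℕ) (f : RZ) : (NA₂ m f) 1 1 = 0 := by
  simp [NA₂, mR, C2, Em, Matrix.add_apply, Matrix.smul_apply, Matrix.map_apply]

-- coefficient extraction lemmas on RZ
lemma czS (k : ℕ) (x : RZ) :
    PowerSeries.coeff (R := R2) (k+1) (z * x) = PowerSeries.coeff (R := R2) k x :=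
  PowerSeries.coeff_succ_X_mul k x

lemma cz0 (x : RZ) : PowerSeries.coeff (R := R2) 0 (z * x) = 0 :=
  PowerSeries.coeff_zero_X_mul x

lemma cCmul (k : ℕ) (r : R2) (x : RZ) :
    PowerSeries.coeff (R := R2) k (cR r * x) = r * PowerSeries.coeff (R := R2) k x :=
  PowerSeries.coeff_C_mul k x r

lemma cpdZ (i : Fin 2) (k : ℕ) (x : RZ) :
    PowerSeries.coeff (R := R2) k (pdZ i x) = pd i (PowerSeries.coeff (R := R2) k x) := by
  simp [pdZ]

lemma czMul (k : ℕ) (g x : RZ) :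
    PowerSeries.coeff (R := R2) (k+1) (z * (g * x))
      = conv2 (fun n => PowerSeries.coeff (R := R2) n g) (fun n => PowerSeries.coeff (R := R2) n x) k := by
  rw [czS, PowerSeries.coeff_mul]
  rfl

/-- **Theorem 8.2 of David–Hertling (uniqueness part).** The normal form of a formal
(T)-structure over the germ at 0 of the F-manifold `I₂(m)` is unique: if two normal forms
`(C₁, C₂ + z·f·E)` and `(C₁, C₂ + z·f̃·E)` with `f, f̃ ∈ ℂ[[z]][t₂]_{≤ m−4}` are formally
gauge-equivalent, then `f = f̃`. -/
theorem formal_T_structure_normal_form_unique (m : ℕ) (hm : 3 ≤ m)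
    (f f' : RZ) (hf : PolyT2 m f) (hf' : PolyT2 m f')
    (h : GaugeT (mR C1) (NA₂ m f) (mR C1) (NA₂ m f')) :
    f = f' := by
  obtain ⟨T, hTu, _hT1, hT2⟩ := h
  have h00 := Matrix.ext_iff.mpr hT2 0 0
  have h01 := Matrix.ext_iff.mpr hT2 0 1
  have h10 := Matrix.ext_iff.mpr hT2 1 0
  have h11 := Matrix.ext_iff.mpr hT2 1 1
  simp only [Matrix.add_apply, Matrix.sub_apply, Matrix.smul_apply, Matrix.mul_apply,
    Fin.sum_univ_two, Matrix.zero_apply, smul_eq_mul, pdM, Matrix.map_apply,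
    NA2_00, NA2_01, NA2_10, NA2_11, zero_mul, mul_zero, one_mul, mul_one,
    add_zero, zero_add] at h00 h01 h10 h11
  -- normalized entry equations
  have E1 : z * pdZ 1 (T 0 0) + (cR (t2 ^ (m-2)) * T 1 0 + z * (f * T 1 0)) - T 0 1 = 0 := by
    linear_combination h00
  have E2 : z * pdZ 1 (T 0 1) + (cR (t2 ^ (m-2)) * T 1 1 + z * (f * T 1 1))
      - (cR (t2 ^ (m-2)) * T 0 0 + z * (f' * T 0 0)) = 0 := by
    linear_combination h01
  have E3 : z * pdZ 1 (T 1 0) + T 0 0 - T 1 1 = 0 := h10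
  have E4 : z * pdZ 1 (T 1 1) + T 0 1 - (cR (t2 ^ (m-2)) * T 1 0 + z * (f' * T 1 0)) = 0 := by
    linear_combination h11
  -- coefficient sequences
  set A : ℕ → R2 := fun k => PowerSeries.coeff (R := R2) k (T 0 0) with hA
  set B : ℕ → R2 := fun k => PowerSeries.coeff (R := R2) k (T 0 1) with hB
  set C : ℕ → R2 := fun k => PowerSeries.coeff (R := R2) k (T 1 0) with hC
  set D : ℕ → R2 := fun k => PowerSeries.coeff (R := R2) k (T 1 1) with hD
  set F : ℕ → R2 := fun k => PowerSeries.coeff (R := R2) k f with hF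
  set F' : ℕ → R2 := fun k => PowerSeries.coeff (R := R2) k f' with hF'
  have e11 : ∀ k, pd 1 (A k) + (t2 ^ (m-2) * C (k+1) + conv2 F C k) - B (k+1) = 0 := by
    intro k
    have hh := congrArg (PowerSeries.coeff (R := R2) (k+1)) E1
    rw [map_zero, map_sub, map_add, map_add, czS, cpdZ, cCmul, czMul] at hh
    exact hh
  have e110 : t2 ^ (m-2) * C 0 - B 0 = 0 := by
    have hh := congrArg (PowerSeries.coeff (R := R2) 0) E1
    rw [map_zero, map_sub, map_add, map_add, cz0, cz0, cCmul] at hh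
    linear_combination hh
  have e12 : ∀ k, pd 1 (B k) + (t2 ^ (m-2) * D (k+1) + conv2 F D k)
      - (t2 ^ (m-2) * A (k+1) + conv2 F' A k) = 0 := by
    intro k
    have hh := congrArg (PowerSeries.coeff (R := R2) (k+1)) E2
    rw [map_zero, map_sub, map_add, map_add, map_add, czS, cpdZ, cCmul, cCmul,
      czMul, czMul] at hh
    exact hh
  have e21 : ∀ k, pd 1 (C k) + A (k+1) - D (k+1) = 0 := by
    intro k
    have hh := congrArg (PowerSeries.coeff (R := R2) (k+1)) E3
    rw [map_zero, map_sub, map_add, czS, cpdZ] at hh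
    exact hh
  have e210 : A 0 - D 0 = 0 := by
    have hh := congrArg (PowerSeries.coeff (R := R2) 0) E3
    rw [map_zero, map_sub, map_add, cz0] at hh
    linear_combination hh
  have e22 : ∀ k, pd 1 (D k) + B (k+1) - (t2 ^ (m-2) * C (k+1) + conv2 F' C k) = 0 := by
    intro k
    have hh := congrArg (PowerSeries.coeff (R := R2) (k+1)) E4
    rw [map_zero, map_sub, map_add, map_add, czS, cpdZ, cCmul, czMul] at hh
    exact hh
  -- the constant term of A is invertible
  have hA0 : MvPowerSeries.constantCoeff (σ := Fin 2) (R := ℂ) (A 0) ≠ 0 := by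
    have hdet : IsUnit T.det := (Matrix.isUnit_iff_isUnit_det T).mp hTu
    have hdet2 : T.det = T 0 0 * T 1 1 - T 0 1 * T 1 0 := Matrix.det_fin_two T
    set φ : RZ →+* ℂ :=
      (MvPowerSeries.constantCoeff (σ := Fin 2) (R := ℂ)).comp (PowerSeries.constantCoeff (R := R2)) with hφ
    have hu : IsUnit (φ T.det) := hdet.map φ
    have hval : ∀ x : RZ, φ x = MvPowerSeries.constantCoeff (σ := Fin 2) (R := ℂ)
        (PowerSeries.coeff (R := R2) 0 x) := by
      intro x
      simp [hφ, PowerSeries.coeff_zero_eq_constantCoeff]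
    have hBC : MvPowerSeries.constantCoeff (σ := Fin 2) (R := ℂ) (B 0) = 0 := by
      have : B 0 = t2 ^ (m-2) * C 0 := by linear_combination - e110
      rw [this, map_mul]
      have : MvPowerSeries.constantCoeff (σ := Fin 2) (R := ℂ) (t2 ^ (m-2)) = 0 := by
        rw [map_pow]
        simp [t2]
        omega
      rw [this, zero_mul]
    have hDA : D 0 = A 0 := by linear_combination - e210
    rw [hdet2, map_sub, map_mul, map_mul, hval, hval, hval, hval] at hu
    have := hu.ne_zero
    intro hz
    apply this
    show MvPowerSeries.constantCoeff (σ := Fin 2) (R := ℂ) (A 0) * MvPowerSeries.constantCoeff (σ := Fin 2) (R := ℂ) (D 0)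
      - MvPowerSeries.constantCoeff (σ := Fin 2) (R := ℂ) (B 0) * MvPowerSeries.constantCoeff (σ := Fin 2) (R := ℂ) (C 0) = 0
    rw [hDA, hz, hBC, zero_mul, zero_mul, sub_zero]
  have hall := core m hm F F' A B C D hf hf' e11 e110 e12 e21 e210 e22 hA0
  exact PowerSeries.ext fun k => hall k

end
end

section
/- Let R be a commutative ring, K an R-module, n ≥ 1 an integer, and C : Rⁿ → End_R(K) an R-linear map such that C(x)∘C(y) = C(y)∘C(x) for all x, y ∈ Rⁿ. Suppose ζ ∈ K is such that the map Rⁿ → K, x ↦ C(x)(ζ), is bijective. Then there exists a unique R-bilinear multiplication ∗ : Rⁿ × Rⁿ → Rⁿ such that C(x ∗ y) = C(x)∘C(y) for all x, y ∈ Rⁿ; this multiplication is commutative and associative; and the unique element e ∈ Rⁿ with C(e)(ζ) = ζ satisfies C(e) = id_K, hence e ∗ x = x for all x ∈ Rⁿ. -/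
/-- **Lemma 6.2(a) of David–Hertling (module-theoretic version).** A primitive Higgs field
`C` (a family of commuting `R`-endomorphisms of `K`, linear in `x ∈ Rⁿ`) with a primitive
element `ζ` (i.e. `x ↦ C(x)(ζ)` is bijective) induces a unique `R`-bilinear multiplication
`∗` on `Rⁿ` with `C(x ∗ y) = C(x) ∘ C(y)`; this multiplication is commutative and
associative, and the unique element `e` with `C(e)(ζ) = ζ` satisfies `C(e) = id`, hence
`e ∗ x = x` for all `x`. -/
theorem primitive_Higgs_induces_multiplication
    (R : Type*) [CommRing R] (K : Type*) [AddCommGroup K] [Module R K]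
    (n : ℕ) (hn : 1 ≤ n)
    (C : (Fin n → R) →ₗ[R] (K →ₗ[R] K))
    (hcomm : ∀ x y : Fin n → R, C x ∘ₗ C y = C y ∘ₗ C x)
    (ζ : K) (hζ : Function.Bijective (fun x : Fin n → R => C x ζ)) :
    (∃! mul : (Fin n → R) →ₗ[R] (Fin n → R) →ₗ[R] (Fin n → R),
      ∀ x y : Fin n → R, C (mul x y) = C x ∘ₗ C y) ∧
    (∀ mul : (Fin n → R) →ₗ[R] (Fin n → R) →ₗ[R] (Fin n → R),
      (∀ x y : Fin n → R, C (mul x y) = C x ∘ₗ C y) →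
        (∀ x y : Fin n → R, mul x y = mul y x) ∧
        (∀ x y w : Fin n → R, mul (mul x y) w = mul x (mul y w)) ∧
        (∀ e : Fin n → R, C e ζ = ζ →
          C e = LinearMap.id ∧ ∀ x : Fin n → R, mul e x = x)) := by
  -- commutation on elements
  have hc : ∀ x y : Fin n → R, ∀ k : K, C x (C y k) = C y (C x k) := by
    intro x y k
    have := congrArg (fun f => f k) (hcomm x y)
    simpa using this
  have hφ : Function.Bijective (C.flip ζ) := hζ
  let φ : (Fin n → R) ≃ₗ[R] K := LinearEquiv.ofBijective (C.flip ζ) hφ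
  have hφ_apply : ∀ x, φ x = C x ζ := fun x => rfl
  have hφ_symm : ∀ k, C (φ.symm k) ζ = k := by
    intro k
    have := φ.apply_symm_apply k
    simpa [hφ_apply] using this
  have hinj : ∀ x y : Fin n → R, C x ζ = C y ζ → x = y := by
    intro x y h
    exact hζ.injective h
  -- key: any endomorphism z with C z ζ = C x (C y ζ) satisfies C z = C x ∘ C y
  have key : ∀ z x y : Fin n → R, C z ζ = C x (C y ζ) → C z = C x ∘ₗ C y := by
    intro z x y h
    ext k
    obtain ⟨w, hw'⟩ := hζ.surjective k
    have hw : C w ζ = k := hw'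
    simp only [LinearMap.comp_apply]
    calc C z k = C z (C w ζ) := by rw [hw]
      _ = C w (C z ζ) := hc z w ζ
      _ = C w (C x (C y ζ)) := by rw [h]
      _ = C x (C w (C y ζ)) := hc w x _
      _ = C x (C y (C w ζ)) := by rw [hc w y ζ]
      _ = C x (C y k) := by rw [hw]
  -- define the multiplication
  let mul : (Fin n → R) →ₗ[R] (Fin n → R) →ₗ[R] (Fin n → R) :=
    LinearMap.mk₂ R (fun x y => φ.symm (C x (C y ζ)))
      (by intro x x' y; simp)
      (by intro r x y; simp)
      (by intro x y y'; simp)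
      (by intro r x y; simp)
  have hmul : ∀ x y : Fin n → R, C (mul x y) = C x ∘ₗ C y := by
    intro x y
    exact key _ x y (hφ_symm _)
  constructor
  · refine ⟨mul, hmul, ?_⟩
    intro m hm
    apply LinearMap.ext; intro x; apply LinearMap.ext; intro y
    apply hinj
    have h1 := congrArg (fun f => f ζ) (hm x y)
    have h2 := congrArg (fun f => f ζ) (hmul x y)
    simp only [LinearMap.comp_apply] at h1 h2
    rw [h1, h2]
  · intro m hm
    refine ⟨?_, ?_, ?_⟩
    · intro x y
      apply hinj
      have h1 := congrArg (fun f => f ζ) (hm x y)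
      have h2 := congrArg (fun f => f ζ) (hm y x)
      simp only [LinearMap.comp_apply] at h1 h2
      rw [h1, h2, hc x y]
    · intro x y w
      apply hinj
      have h1 := congrArg (fun f => f ζ) (hm (m x y) w)
      have h2 := congrArg (fun f => f ζ) (hm x (m y w))
      simp only [LinearMap.comp_apply] at h1 h2
      rw [h1, h2]
      have h3 := congrArg (fun f => f (C w ζ)) (hm x y)
      have h4 := congrArg (fun f => f ζ) (hm y w)
      simp only [LinearMap.comp_apply] at h3 h4
      rw [h3, h4]
    · intro e he
      have hCe : C e = LinearMap.id := by
        ext k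
        obtain ⟨w, hw'⟩ := hζ.surjective k
        have hw : C w ζ = k := hw'
        calc C e k = C e (C w ζ) := by rw [hw]
          _ = C w (C e ζ) := hc e w ζ
          _ = C w ζ := by rw [he]
          _ = k := hw
        |>.trans rfl
      refine ⟨hCe, ?_⟩
      intro x
      apply hinj
      have h1 := congrArg (fun f => f ζ) (hm e x)
      simp only [LinearMap.comp_apply] at h1
      rw [h1, hCe]
      rfl
end

section
/- In the polynomial ring ℂ[t₁, t₂, t₃, t₄, y₁, y₂, y₃, y₄], the element y₃² does not belong to the ideal I = (y₁ − 1, (y₂ − t₄y₃)², (y₂ − t₄y₃)y₃, y₃³, y₄ − y₃²). -/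
/-!
Send `t₁, …, t₄, y₂` to `0`, `y₁` to `1`, `y₃` to the class `x` of `X` in `ℂ[X]/(X³)` and `y₄`
to `x²`. Every generator of the ideal maps to `0` (the only nontrivial one being `y₃³ ↦ x³ = 0`),
while `y₃² ↦ x² ≠ 0`, so `y₃²` cannot lie in the ideal.
-/

open MvPolynomial

theorem Ideal.notMem_span_of_map_eq_zero {R S F : Type*} [Semiring R] [Semiring S]
    [FunLike F R S] [RingHomClass F R S] (f : F) {s : Set R} {p : R}
    (hs : ∀ a ∈ s, f a = 0) (hp : f p ≠ 0) : p ∉ Ideal.span s :=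
  fun h => hp ((Ideal.span_le (I := RingHom.ker f)).2 hs h)

namespace Polynomial

variable {R : Type*} [CommRing R]

theorem X_pow_notMem_span_X_pow [Nontrivial R] {k n : ℕ} (hkn : k < n) :
    (X : R[X]) ^ k ∉ Ideal.span {X ^ n} := by
  rw [Ideal.mem_span_singleton, X_pow_dvd_iff, not_forall]
  exact ⟨k, by simp [hkn]⟩

theorem mk_X_pow_span_X_pow_self (n : ℕ) :
    Ideal.Quotient.mk (Ideal.span {X ^ n}) ((X : R[X]) ^ n) = 0 :=
  Ideal.Quotient.eq_zero_iff_mem.2 (Ideal.subset_span rfl)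

theorem mk_X_pow_span_X_pow_ne_zero [Nontrivial R] {k n : ℕ} (hkn : k < n) :
    Ideal.Quotient.mk (Ideal.span {X ^ n}) ((X : R[X]) ^ k) ≠ 0 :=
  fun h => X_pow_notMem_span_X_pow hkn (Ideal.Quotient.eq_zero_iff_mem.1 h)

end Polynomial

/-- Variables are indexed `0, …, 7`, with `tᵢ = X (i - 1)` and `yⱼ = X (3 + j)`. -/
theorem y3_sq_not_mem_ideal :
    (X 6 : MvPolynomial (Fin 8) ℂ) ^ 2 ∉
      Ideal.span {(X 4 : MvPolynomial (Fin 8) ℂ) - 1,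
        (X 5 - X 3 * X 6) ^ 2,
        (X 5 - X 3 * X 6) * X 6,
        (X 6 : MvPolynomial (Fin 8) ℂ) ^ 3,
        X 7 - X 6 ^ 2} := by
  set x := Ideal.Quotient.mk (Ideal.span {Polynomial.X ^ 3}) (Polynomial.X : Polynomial ℂ) with hx
  have hx3 : x ^ 3 = 0 := by rw [hx, ← map_pow, Polynomial.mk_X_pow_span_X_pow_self]
  have hx2 : x ^ 2 ≠ 0 := by
    rw [hx, ← map_pow]
    exact Polynomial.mk_X_pow_span_X_pow_ne_zero (by norm_num)
  refine Ideal.notMem_span_of_map_eq_zero (aeval ![0, 0, 0, 0, 1, 0, x, x ^ 2]) ?_ ?_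
  · simp [hx3]
  · simpa using hx2
end
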